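/- arXiv:2505.02616 — 5 statements merged into one kernel-verified Lean document; each statement's English description precedes it below -/
import Mathlib

section
/- The function x(t) = √(c²(t−t₀)² + 4L²) satisfies the constraint equation (1/2)ẋ² + 2c²L²/x² − c²/2 = 0 (the two-universe MIU constraint with ρ = 0 and curvature k = −1), and x(t) ≥ 2L > 0 for all t. -/
open Real

/-!
Put `τ = t - t₀`. Since `x² = c²τ² + 4L²`, differentiating gives `x ẋ = c²τ`, so
`ẋ² x² = c²(x² - 4L²)`, which is the constraint multiplied by `2x²`; and `x ≥ 2L` because
`c²τ² ≥ 0`. As `4L² > 0`, `x` stays away from the branch point of the square root.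
-/

theorem hasDerivAt_sqrt_quadratic {a b t₀ t : ℝ} (h : 0 < a * (t - t₀) ^ 2 + b) :
    HasDerivAt (fun s => √(a * (s - t₀) ^ 2 + b))
      (a * (t - t₀) / √(a * (t - t₀) ^ 2 + b)) t := by
  have hquad : HasDerivAt (fun s => a * (s - t₀) ^ 2 + b) (a * (2 * (t - t₀))) t := by
    simpa using (((hasDerivAt_id t).sub_const t₀).fun_pow 2).const_mul a |>.add_const b
  convert hquad.sqrt h.ne' using 1
  field_simp

theorem deriv_sqrt_quadratic_sq_add {a b t₀ t : ℝ} (h : 0 < a * (t - t₀) ^ 2 + b) :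
    deriv (fun s => √(a * (s - t₀) ^ 2 + b)) t ^ 2 + a * b / √(a * (t - t₀) ^ 2 + b) ^ 2 =
      a := by
  rw [(hasDerivAt_sqrt_quadratic h).deriv, div_pow, sq_sqrt h.le]
  field_simp

theorem two_universe_pure_quantum_solution_general
    (c L t₀ : ℝ) (hL : 0 < L)
    (x : ℝ → ℝ)
    (hx : ∀ t, x t = Real.sqrt (c ^ 2 * (t - t₀) ^ 2 + 4 * L ^ 2)) :
    ∀ t, ((1/2) * (deriv x t) ^ 2 + 2 * c ^ 2 * L ^ 2 / (x t) ^ 2 - c ^ 2 / 2 = 0) ∧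
      2 * L ≤ x t := by
  intro t
  obtain rfl : x = fun s => √(c ^ 2 * (s - t₀) ^ 2 + 4 * L ^ 2) := funext hx
  have hpos : 0 < c ^ 2 * (t - t₀) ^ 2 + 4 * L ^ 2 := by positivity
  constructor
  · linear_combination (1 / 2 : ℝ) * deriv_sqrt_quadratic_sq_add hpos
  · exact (le_abs_self _).trans (abs_le_sqrt (by nlinarith [sq_nonneg (c * (t - t₀))]))

theorem two_universe_pure_quantum_solution
    (c L t₀ : ℝ) (hc : 0 < c) (hL : 0 < L)
    (x : ℝ → ℝ)
    (hx : ∀ t, x t = Real.sqrt (c ^ 2 * (t - t₀) ^ 2 + 4 * L ^ 2)) :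
    ∀ t, ((1/2) * (deriv x t) ^ 2 + 2 * c ^ 2 * L ^ 2 / (x t) ^ 2 - c ^ 2 / 2 = 0) ∧
      2 * L ≤ x t :=
  two_universe_pure_quantum_solution_general c L t₀ hL x hx
end

section
/- For μ > L > 0, the parametric curve x(η) = μ + √(μ² − 4L²)·sin η, t(η) = t₀ + (1/c)(μη − √(μ² − L²)·cos η) (dust-filled closed universe with quantum potential) has x bounded: μ − √(μ² − 4L²) ≤ x(η) ≤ μ + √(μ² − 4L²), and in particular x(η) > 0 for all η, so the solution is nonsingular. -/
open Real

theorem dust_closed_universe_bounded_nonsingular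
    (μ L c t₀ : ℝ) (hL : 0 < L) (hμ : 2 * L < μ) (hc : 0 < c)
    (x t : ℝ → ℝ)
    (hx : ∀ η, x η = μ + Real.sqrt (μ ^ 2 - 4 * L ^ 2) * Real.sin η)
    (ht : ∀ η, t η = t₀ + (1 / c) * (μ * η - Real.sqrt (μ ^ 2 - L ^ 2) * Real.cos η)) :
    ∀ η, μ - Real.sqrt (μ ^ 2 - 4 * L ^ 2) ≤ x η ∧
      x η ≤ μ + Real.sqrt (μ ^ 2 - 4 * L ^ 2) ∧ 0 < x η := by
  intro η
  have hμ0 : 0 < μ := lt_trans (by linarith) hμ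
  have hs0 : 0 ≤ Real.sqrt (μ ^ 2 - 4 * L ^ 2) := Real.sqrt_nonneg _
  have hlt : Real.sqrt (μ ^ 2 - 4 * L ^ 2) < μ := by
    have : μ ^ 2 - 4 * L ^ 2 < μ ^ 2 := by nlinarith
    calc Real.sqrt (μ ^ 2 - 4 * L ^ 2) < Real.sqrt (μ ^ 2) := by
          apply Real.sqrt_lt_sqrt ?_ this
          nlinarith
      _ = μ := by rw [Real.sqrt_sq hμ0.le]
  have h1 : -1 ≤ Real.sin η := neg_one_le_sin η
  have h2 : Real.sin η ≤ 1 := sin_le_one η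
  rw [hx]
  refine ⟨by nlinarith, by nlinarith, by nlinarith⟩
end

section
/- If δ = 4(2πGR²/3 − L²c²) < 0, then x(t) = √(c²(t−t₀)² + |δ|/c²) satisfies the radiation-dominated open-universe (k = −1) constraint (1/2)ẋ² − (4πG/3)(R²/x⁴)x² + 2c²L²/x² − c²/2 = 0, and x(t) ≥ √|δ|/c > 0 for all t, so the universe is nonsingular. -/
open Real

/-
Writing `x² = c²(t - t₀)² + |δ|/c²`, differentiation gives `x ẋ = c²(t - t₀)`, hence
`ẋ² x² = c² x² - |δ| = c² x² + δ`. Dividing by `2x²`, this energy identity is exactly the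
constraint once `δ` is expanded; the lower bound is monotonicity of `√`.
-/

theorem sqrt_quadratic_mul_deriv {a b t₀ t : ℝ} (h : 0 < a * (t - t₀) ^ 2 + b) :
    √(a * (t - t₀) ^ 2 + b) * deriv (fun s => √(a * (s - t₀) ^ 2 + b)) t = a * (t - t₀) := by
  have hquad : HasDerivAt (fun s => a * (s - t₀) ^ 2 + b) (a * (2 * (t - t₀))) t := by
    simpa using ((((hasDerivAt_id t).sub_const t₀).pow 2).const_mul a).add_const b
  rw [(hquad.sqrt h.ne').deriv]
  field_simp [(sqrt_pos.mpr h).ne']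

theorem sq_deriv_mul_sq_sqrt_quadratic {a b t₀ t : ℝ} (h : 0 < a * (t - t₀) ^ 2 + b) :
    (deriv (fun s => √(a * (s - t₀) ^ 2 + b)) t) ^ 2 * √(a * (t - t₀) ^ 2 + b) ^ 2 =
      a * (√(a * (t - t₀) ^ 2 + b) ^ 2 - b) := by
  rw [← mul_pow, mul_comm, sqrt_quadratic_mul_deriv h, sq_sqrt h.le]
  ring

theorem radiation_constraint_of_sq_mul_sq {G c R L δ X V : ℝ} (hX : X ≠ 0)
    (hδ : δ = 4 * (2 * π * G * R ^ 2 / 3 - L ^ 2 * c ^ 2))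
    (hV : V ^ 2 * X ^ 2 = c ^ 2 * X ^ 2 + δ) :
    (1/2) * V ^ 2 - (4 * π * G / 3) * (R ^ 2 / X ^ 4) * X ^ 2 +
      2 * c ^ 2 * L ^ 2 / X ^ 2 - c ^ 2 / 2 = 0 := by
  subst hδ
  field_simp
  linear_combination 3 * hV

theorem sqrt_div_le_sqrt_sq_mul_add {c d s : ℝ} (hc : 0 < c) :
    √d / c ≤ √(c ^ 2 * s ^ 2 + d / c ^ 2) := by
  calc √d / c = √(d / c ^ 2) := by rw [sqrt_div' d (sq_nonneg c), sqrt_sq hc.le]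
    _ ≤ √(c ^ 2 * s ^ 2 + d / c ^ 2) := sqrt_le_sqrt (le_add_of_nonneg_left (by positivity))

theorem radiation_dominated_solution_delta_negative_nonsingular_general
    (G c R L t₀ : ℝ) (hc : 0 < c)
    (δ : ℝ) (hδdef : δ = 4 * (2 * π * G * R ^ 2 / 3 - L ^ 2 * c ^ 2)) (hδ : δ < 0)
    (x : ℝ → ℝ)
    (hx : ∀ t, x t = Real.sqrt (c ^ 2 * (t - t₀) ^ 2 + |δ| / c ^ 2)) :
    ∀ t, ((1/2) * (deriv x t) ^ 2 - (4 * π * G / 3) * (R ^ 2 / (x t) ^ 4) * (x t) ^ 2 +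
        2 * c ^ 2 * L ^ 2 / (x t) ^ 2 - c ^ 2 / 2 = 0) ∧
      Real.sqrt |δ| / c ≤ x t ∧ 0 < x t := by
  intro t
  obtain rfl : x = fun s => √(c ^ 2 * (s - t₀) ^ 2 + |δ| / c ^ 2) := funext hx
  have hpos : 0 < c ^ 2 * (t - t₀) ^ 2 + |δ| / c ^ 2 := by
    have := abs_pos.mpr hδ.ne
    positivity
  have henergy := sq_deriv_mul_sq_sqrt_quadratic hpos
  rw [sq_sqrt hpos.le] at henergy
  refine ⟨radiation_constraint_of_sq_mul_sq (sqrt_pos.mpr hpos).ne' hδdef ?_,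
    sqrt_div_le_sqrt_sq_mul_add hc, sqrt_pos.mpr hpos⟩
  rw [sq_sqrt hpos.le, henergy, abs_of_neg hδ]
  field_simp
  ring

theorem radiation_dominated_solution_delta_negative_nonsingular
    (G c R L t₀ : ℝ) (hG : 0 < G) (hc : 0 < c) (hR : 0 < R) (hL : 0 < L)
    (δ : ℝ) (hδdef : δ = 4 * (2 * π * G * R ^ 2 / 3 - L ^ 2 * c ^ 2)) (hδ : δ < 0)
    (x : ℝ → ℝ)
    (hx : ∀ t, x t = Real.sqrt (c ^ 2 * (t - t₀) ^ 2 + |δ| / c ^ 2)) :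
    ∀ t, ((1/2) * (deriv x t) ^ 2 - (4 * π * G / 3) * (R ^ 2 / (x t) ^ 4) * (x t) ^ 2 +
        2 * c ^ 2 * L ^ 2 / (x t) ^ 2 - c ^ 2 / 2 = 0) ∧
      Real.sqrt |δ| / c ≤ x t ∧ 0 < x t :=
  radiation_dominated_solution_delta_negative_nonsingular_general G c R L t₀ hc δ hδdef hδ x hx
end

section
/- Suppose a₂ : ℝ → ℝ is a C² solution of ä₂ = −(Lc)²·∂U/∂a₂ with constraint (1/2)ȧ₂² + (Lc)²·U = c²/2, where near a purported singularity U is dominated by 2/a₂², i.e. a₂ satisfies ä₂ = 4(Lc)²/a₂³ with first integral (1/2)ȧ₂² + 2(Lc)²/a₂² = ε². Then a₂(t) = √(2ε²(t−t₀)² + 2(Lc)²/ε²) and a₂ is bounded below by the positive constant √2·Lc/|ε|, so a₂ never reaches zero (no Big Bang/Big Crunch singularity for the purely quantum universe). -/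
/-!
Writing `f = a²`, the equation of motion together with the first integral gives
`f'' = 2 ȧ² + 2 a ä = 2 ȧ² + 8 K / a² = 4 ε²`, so `f` is a quadratic polynomial in `t` with
leading coefficient `2 ε²`. The first integral also yields `f'² = 4 a² ȧ² = 8 ε² f - 16 K`,
which pins down the minimum value of this parabola as `2 K / ε²`.
-/

theorem eq_add_mul_of_hasDerivAt_const {g : ℝ → ℝ} {k : ℝ} (hg : ∀ t, HasDerivAt g k t)
    (t : ℝ) : g t = g 0 + k * t := by
  have hderiv : ∀ s, HasDerivAt (fun u ↦ g u - k * u) 0 s := fun s ↦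
    ((hg s).sub ((hasDerivAt_id' s).const_mul k)).congr_deriv (by ring)
  have := is_const_of_deriv_eq_zero (fun s ↦ (hderiv s).differentiableAt)
    (fun s ↦ (hderiv s).deriv) t 0
  simp only [mul_zero, sub_zero] at this
  linarith

theorem eq_quadratic_of_hasDerivAt_of_hasDerivAt_const {f f' : ℝ → ℝ} {k : ℝ}
    (hf : ∀ t, HasDerivAt f (f' t) t) (hf' : ∀ t, HasDerivAt f' k t) (t : ℝ) :
    f t = f 0 + f' 0 * t + k / 2 * t ^ 2 := by
  have hderiv : ∀ s, HasDerivAt (fun u ↦ f u - k / 2 * u ^ 2) (f' 0) s := fun s ↦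
    ((hf s).sub ((hasDerivAt_pow 2 s).const_mul (k / 2))).congr_deriv (by
      rw [eq_add_mul_of_hasDerivAt_const hf' s]; push_cast; ring)
  have := eq_add_mul_of_hasDerivAt_const hderiv t
  simp only [ne_eq, OfNat.ofNat_ne_zero, not_false_eq_true, zero_pow, mul_zero, sub_zero] at this
  linarith

section InverseCubeForce

variable {a v : ℝ → ℝ} {K ε t : ℝ}

theorem hasDerivAt_two_mul_mul_of_inverse_cube (ha : HasDerivAt a (v t) t)
    (hv : HasDerivAt v (4 * K / a t ^ 3) t) (hat : a t ≠ 0)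
    (henergy : 1 / 2 * v t ^ 2 + 2 * K / a t ^ 2 = ε ^ 2) :
    HasDerivAt (fun s ↦ 2 * a s * v s) (4 * ε ^ 2) t := by
  refine ((ha.const_mul 2).mul hv).congr_deriv ?_
  field_simp at henergy ⊢
  linear_combination 2 * henergy

theorem two_mul_mul_sq_of_energy {a v K ε : ℝ} (ha : a ≠ 0)
    (henergy : 1 / 2 * v ^ 2 + 2 * K / a ^ 2 = ε ^ 2) :
    (2 * a * v) ^ 2 = 8 * ε ^ 2 * a ^ 2 - 16 * K := by
  field_simp at henergy
  linear_combination 4 * henergy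

theorem eq_vertex_form_of_discriminant {B C : ℝ} (hε : ε ≠ 0)
    (hdisc : B ^ 2 = 8 * ε ^ 2 * C - 16 * K) (t : ℝ) :
    C + B * t + 2 * ε ^ 2 * t ^ 2 = 2 * ε ^ 2 * (t - -B / (4 * ε ^ 2)) ^ 2 + 2 * K / ε ^ 2 := by
  field_simp
  linear_combination (-2) * hdisc

theorem sq_eq_vertex_form_of_inverse_cube (hε : ε ≠ 0) (ha : ∀ t, HasDerivAt a (v t) t)
    (hv : ∀ t, HasDerivAt v (4 * K / a t ^ 3) t) (hne : ∀ t, a t ≠ 0)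
    (henergy : ∀ t, 1 / 2 * v t ^ 2 + 2 * K / a t ^ 2 = ε ^ 2) :
    ∃ t₀, ∀ t, a t ^ 2 = 2 * ε ^ 2 * (t - t₀) ^ 2 + 2 * K / ε ^ 2 := by
  have hsq : ∀ t, HasDerivAt (fun s ↦ a s ^ 2) (2 * a t * v t) t := fun t ↦
    ((ha t).pow 2).congr_deriv (by ring)
  have hquad := eq_quadratic_of_hasDerivAt_of_hasDerivAt_const hsq
    fun t ↦ hasDerivAt_two_mul_mul_of_inverse_cube (ha t) (hv t) (hne t) (henergy t)
  refine ⟨-(2 * a 0 * v 0) / (4 * ε ^ 2), fun t ↦ ?_⟩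
  rw [hquad t, ← eq_vertex_form_of_discriminant hε
    (two_mul_mul_sq_of_energy (hne 0) (henergy 0)) t]
  ring

end InverseCubeForce

theorem sqrt_two_mul_sq_div_sq {x : ℝ} (hx : 0 ≤ x) (ε : ℝ) :
    √(2 * x ^ 2 / ε ^ 2) = √2 * x / |ε| := by
  rw [Real.sqrt_div' _ (sq_nonneg ε), Real.sqrt_mul zero_le_two, Real.sqrt_sq hx,
    Real.sqrt_sq_eq_abs]

theorem purely_quantum_universe_no_singularity
    (L c ε : ℝ) (hL : 0 < L) (hc : 0 < c) (hε : ε ≠ 0)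
    (a₂ : ℝ → ℝ) (ha : ContDiff ℝ 2 a₂) (hpos : ∀ t, 0 < a₂ t)
    (hode : ∀ t, deriv (deriv a₂) t = 4 * (L * c) ^ 2 / (a₂ t) ^ 3)
    (henergy : ∀ t, (1/2) * (deriv a₂ t) ^ 2 + 2 * (L * c) ^ 2 / (a₂ t) ^ 2 = ε ^ 2) :
    ∃ t₀ : ℝ,
      (∀ t, a₂ t = Real.sqrt (2 * ε ^ 2 * (t - t₀) ^ 2 + 2 * (L * c) ^ 2 / ε ^ 2)) ∧
      (∀ t, Real.sqrt 2 * L * c / |ε| ≤ a₂ t) ∧ 0 < Real.sqrt 2 * L * c / |ε| := by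
  have hderiv : ∀ t, HasDerivAt a₂ (deriv a₂ t) t := fun t ↦
    ((ha.differentiable two_ne_zero) t).hasDerivAt
  have hderiv₂ : ∀ t, HasDerivAt (deriv a₂) (4 * (L * c) ^ 2 / a₂ t ^ 3) t := fun t ↦ by
    rw [← hode t]
    exact (ha.differentiable_deriv_two t).hasDerivAt
  obtain ⟨t₀, ht₀⟩ := sq_eq_vertex_form_of_inverse_cube hε hderiv hderiv₂
    (fun t ↦ (hpos t).ne') henergy
  have hformula : ∀ t, a₂ t = √(2 * ε ^ 2 * (t - t₀) ^ 2 + 2 * (L * c) ^ 2 / ε ^ 2) := fun t ↦ by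
    rw [← ht₀ t, Real.sqrt_sq (hpos t).le]
  refine ⟨t₀, hformula, fun t ↦ ?_, by positivity⟩
  rw [hformula t, mul_assoc, ← sqrt_two_mul_sq_div_sq (by positivity)]
  gcongr
  exact le_add_of_nonneg_left (by positivity)
end

section
/- With r(t)² = α/(2E) + 2E(t+β₁)², the Hubble parameters H₂ = ṙ/r + cot φ·φ̇ and H₃ = ṙ/r − tan φ·φ̇, where r²φ̇ = ±√(2(α − v(φ))), satisfy H₂(t)·t → 1 and H₃(t)·t → 1 as t → +∞, provided tan φ(t) stays in a compact subset of (0, ∞) and v(φ(t)) ≤ α stays bounded. -/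
open Real Filter

theorem hubble_parameters_asymptotics
    (α E β₁ s : ℝ) (hα : 0 < α) (hE : 0 < E) (hs : s = 1 ∨ s = -1)
    (r φ v H₂ H₃ : ℝ → ℝ)
    (hr : ∀ t, (r t) ^ 2 = α / (2 * E) + 2 * E * (t + β₁) ^ 2)
    (hrpos : ∀ t, 0 < r t)
    (hrdiff : Differentiable ℝ r) (hφdiff : Differentiable ℝ φ)
    (hmom : ∀ t, (r t) ^ 2 * deriv φ t = s * Real.sqrt (2 * (α - v (φ t))))
    (hv : ∀ t, v (φ t) ≤ α)
    (hvbdd : ∃ B : ℝ, ∀ t, |v (φ t)| ≤ B)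
    (htan : ∃ m M : ℝ, 0 < m ∧ ∀ t, m ≤ Real.tan (φ t) ∧ Real.tan (φ t) ≤ M)
    (hH₂ : ∀ t, H₂ t = deriv r t / r t + (Real.cos (φ t) / Real.sin (φ t)) * deriv φ t)
    (hH₃ : ∀ t, H₃ t = deriv r t / r t - Real.tan (φ t) * deriv φ t) :
    Tendsto (fun t => H₂ t * t) atTop (nhds 1) ∧
    Tendsto (fun t => H₃ t * t) atTop (nhds 1) := by
  obtain ⟨B, hB⟩ := hvbdd
  obtain ⟨m, M, hm, hmM⟩ := htan
  set c := α / (2 * E) with hcdef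
  have hE2 : (0:ℝ) < 2 * E := by linarith
  have hc : 0 < c := div_pos hα hE2
  have hden : ∀ t : ℝ, 0 < c + 2 * E * (t + β₁) ^ 2 := by
    intro t; nlinarith [sq_nonneg (t + β₁)]
  have hrne : ∀ t, r t ≠ 0 := fun t => (hrpos t).ne'
  -- derivative of r
  have hdr : ∀ t, deriv r t = 2 * E * (t + β₁) / r t := by
    intro t
    have h1 : HasDerivAt (fun t => r t ^ 2) ((2:ℕ) * r t ^ 1 * deriv r t) t :=
      ((hrdiff t).hasDerivAt).pow 2
    have h2 : HasDerivAt (fun t : ℝ => c + 2 * E * (t + β₁) ^ 2)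
        (2 * E * ((2:ℕ) * (t + β₁) ^ 1 * 1)) t := by
      exact ((((hasDerivAt_id t).add_const β₁).pow 2).const_mul (2 * E)).const_add c
    have heq : (fun t => r t ^ 2) = fun t : ℝ => c + 2 * E * (t + β₁) ^ 2 := funext hr
    rw [heq] at h1
    have huniq := h1.unique h2
    rw [eq_div_iff (hrne t)]
    push_cast at huniq
    nlinarith [huniq]
  have hrr : ∀ t, deriv r t / r t = 2 * E * (t + β₁) / (c + 2 * E * (t + β₁) ^ 2) := by
    intro t
    rw [hdr t, div_div]
    congr 1
    rw [← pow_two, hr t]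
  -- derivative of φ
  have hdφ : ∀ t, deriv φ t = s * Real.sqrt (2 * (α - v (φ t))) / (c + 2 * E * (t + β₁) ^ 2) := by
    intro t
    have h := hmom t
    rw [hr t] at h
    rw [eq_div_iff (hden t).ne']
    linear_combination h
  -- sqrt bound
  have hsqrt : ∀ t, Real.sqrt (2 * (α - v (φ t))) ≤ Real.sqrt (2 * (α + B)) := by
    intro t
    apply Real.sqrt_le_sqrt
    have := (abs_le.mp (hB t)).1
    linarith
  have hsabs : |s| = 1 := by rcases hs with h | h <;> simp [h]
  -- cot bound
  have hcot : ∀ t, |Real.cos (φ t) / Real.sin (φ t)| ≤ 1 / m := by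
    intro t
    have htp : 0 < Real.tan (φ t) := lt_of_lt_of_le hm (hmM t).1
    have hcos : Real.cos (φ t) ≠ 0 := by
      intro h
      rw [Real.tan_eq_sin_div_cos, h, div_zero] at htp
      exact lt_irrefl 0 htp
    have hco : Real.cos (φ t) / Real.sin (φ t) = (Real.tan (φ t))⁻¹ := by
      rw [Real.tan_eq_sin_div_cos, inv_div]
    rw [hco, abs_inv, abs_of_pos htp, one_div]
    gcongr
    exact (hmM t).1
  have htanb : ∀ t, |Real.tan (φ t)| ≤ M := by
    intro t
    have h1 := (hmM t).1
    have h2 := (hmM t).2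
    rw [abs_le]
    constructor <;> linarith
  -- basic limits
  have h0 : Tendsto (fun t : ℝ => 1 / t) atTop (nhds 0) := by
    simpa [one_div] using tendsto_inv_atTop_zero
  have hDen : Tendsto (fun t : ℝ => c * (1 / t) ^ 2 + 2 * E * (1 + β₁ * (1 / t)) ^ 2)
      atTop (nhds (2 * E)) := by
    have hA : Tendsto (fun t : ℝ => c * (1 / t) ^ 2) atTop (nhds (c * 0 ^ 2)) :=
      (h0.pow 2).const_mul c
    have hBb : Tendsto (fun t : ℝ => 2 * E * (1 + β₁ * (1 / t)) ^ 2) atTop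
        (nhds (2 * E * (1 + β₁ * 0) ^ 2)) :=
      (((h0.const_mul β₁).const_add 1).pow 2).const_mul (2 * E)
    have h := hA.add hBb
    norm_num at h
    simpa [one_div] using h
  have hL1 : Tendsto (fun t : ℝ => 2 * E * (t + β₁) * t / (c + 2 * E * (t + β₁) ^ 2))
      atTop (nhds 1) := by
    have hNum : Tendsto (fun t : ℝ => 2 * E * (1 + β₁ * (1 / t))) atTop (nhds (2 * E)) := by
      have h := ((h0.const_mul β₁).const_add 1).const_mul (2 * E)
      norm_num at h
      simpa [one_div] using h
    have hdiv := hNum.div hDen hE2.ne'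
    have heq : (fun t : ℝ => 2 * E * (1 + β₁ * (1 / t)) /
        (c * (1 / t) ^ 2 + 2 * E * (1 + β₁ * (1 / t)) ^ 2)) =ᶠ[atTop]
        fun t : ℝ => 2 * E * (t + β₁) * t / (c + 2 * E * (t + β₁) ^ 2) := by
      filter_upwards [eventually_gt_atTop 0] with t ht
      have htne : t ≠ 0 := ht.ne'
      have hd := (hden t).ne'
      field_simp
    have := hdiv.congr' heq
    rwa [div_self hE2.ne'] at this
  have hL2 : Tendsto (fun t : ℝ => t / (c + 2 * E * (t + β₁) ^ 2)) atTop (nhds 0) := by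
    have hdiv := h0.div hDen hE2.ne'
    have heq : (fun t : ℝ => (1 / t) /
        (c * (1 / t) ^ 2 + 2 * E * (1 + β₁ * (1 / t)) ^ 2)) =ᶠ[atTop]
        fun t : ℝ => t / (c + 2 * E * (t + β₁) ^ 2) := by
      filter_upwards [eventually_gt_atTop 0] with t ht
      have htne : t ≠ 0 := ht.ne'
      have hd := (hden t).ne'
      field_simp
    have := hdiv.congr' heq
    rwa [zero_div] at this
  -- key vanishing lemma
  have key : ∀ (g : ℝ → ℝ) (C : ℝ), 0 ≤ C → (∀ t, |g t| ≤ C) →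
      Tendsto (fun t => g t * deriv φ t * t) atTop (nhds 0) := by
    intro g C hC hg
    have htend : Tendsto (fun t => C * Real.sqrt (2 * (α + B)) *
        (t / (c + 2 * E * (t + β₁) ^ 2))) atTop (nhds 0) := by
      have := hL2.const_mul (C * Real.sqrt (2 * (α + B)))
      simpa using this
    refine squeeze_zero_norm' ?_ htend
    · filter_upwards [eventually_ge_atTop 0] with t ht
      have hbound : |deriv φ t| ≤ Real.sqrt (2 * (α + B)) / (c + 2 * E * (t + β₁) ^ 2) := by
        rw [hdφ t, abs_div, abs_of_pos (hden t), abs_mul, hsabs, one_mul,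
          abs_of_nonneg (Real.sqrt_nonneg _)]
        gcongr
        have := (abs_le.mp (hB t)).1
        linarith
      have hnorm : ‖g t * deriv φ t * t‖ = |g t| * |deriv φ t| * t := by
        rw [Real.norm_eq_abs, abs_mul, abs_mul, abs_of_nonneg ht]
      rw [hnorm]
      have h2 : |g t| * |deriv φ t| * t ≤
          C * (Real.sqrt (2 * (α + B)) / (c + 2 * E * (t + β₁) ^ 2)) * t := by
        apply mul_le_mul_of_nonneg_right _ ht
        exact mul_le_mul (hg t) hbound (abs_nonneg _) hC
      refine h2.trans_eq ?_
      ring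
  have hM0 : (0:ℝ) ≤ M := le_trans hm.le (le_trans (hmM 0).1 (hmM 0).2)
  have hm0 : (0:ℝ) ≤ 1 / m := by positivity
  constructor
  · have hAdd := hL1.add (key (fun t => Real.cos (φ t) / Real.sin (φ t)) (1 / m) hm0 hcot)
    rw [add_zero] at hAdd
    apply hAdd.congr
    intro t
    rw [hH₂ t, hrr t]
    ring
  · have hAdd := hL1.add (key (fun t => -Real.tan (φ t)) M hM0
      (fun t => by rw [abs_neg]; exact htanb t))
    rw [add_zero] at hAdd
    apply hAdd.congr
    intro t
    rw [hH₃ t, hrr t]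
    ring
end
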